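/- Let A = (a_{ij}) be a symmetrizable generalized Cartan matrix indexed by a finite set I such that every 2×2 principal submatrix A|_{i,j} (i≠j) is one of A₁⊕A₁ = [[2,0],[0,2]], A₂ = [[2,−1],[−1,2]], B₂ = [[2,−2],[−1,2]] or its transpose. Let X and X' be A-regular graphs, each satisfying (S6),(S7),(S8),(S9) for every ordered pair (i,j) with A|_{i,j}=B₂, with maximum elements x₀ ∈ X and x'₀ ∈ X' respectively. If φ_i(x₀) = φ_i(x'₀) for all i ∈ I, then there exists a unique isomorphism of I-colored directed graphs X → X' (i.e. a unique bijection h : X → X' such that for all i ∈ I and x,y ∈ X, f̃_i x = y if and only if f̃_i h(x) = h(y)). -/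

import Mathlib

/-!
Both graphs are graded by the distance from their maximum element: by (S4) and (S6), the two
arrows `ẽ_i x`, `ẽ_j x` out of any element are closed up by `ẽ`-paths of equal length (one of
the configurations (A), (B), (P), (Q), (R) of the paper), so Newman's argument shows that all
`ẽ`-paths from `x` to `x₀` have the same length.

Relate `x ∈ X` and `y ∈ X'` when they are reached from the maximum elements by the same word in
the `f̃_i`. By induction on the level, this relation is a bijection preserving `ε`, `φ` and the
arrows. The weight `φ_i - ε_i` is preserved automatically, and the main point is that two words
reaching the same `x` reach the same `y`: the configuration above `x` that identifies the two
words in `X` lies at lower levels, where the relation is already an isomorphism, so it is copied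
to `X'`, where (S5), (S7), (S8) or (S9) identifies the two words as well. Any isomorphism sends
`x₀` to `x'₀` and therefore agrees with this relation.
-/

def iterOpt {X : Type*} (g : X → Option X) : ℕ → X → Option X
  | 0, x => some x
  | n+1, x => (g x).bind (iterOpt g n)

def chainOpt {X I : Type*} (g : I → X → Option X) (w : List I) (x : X) : Option X :=
  w.foldr (fun i o => o.bind (g i)) (some x)

/-- A good I-colored directed graph: partial operators `e i`, `f i` that are mutually
inverse partial bijections, together with the (finite) string lengths `eps`, `phi`. -/
structure GoodGraph (I : Type*) (X : Type*) where
  e : I → X → Option X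
  f : I → X → Option X
  eps : I → X → ℕ
  phi : I → X → ℕ
  ef : ∀ i x y, e i y = some x ↔ f i x = some y
  eps_ne : ∀ i x, iterOpt (e i) (eps i x) x ≠ none
  eps_top : ∀ i x, iterOpt (e i) (eps i x + 1) x = none
  phi_ne : ∀ i x, iterOpt (f i) (phi i x) x ≠ none
  phi_top : ∀ i x, iterOpt (f i) (phi i x + 1) x = none

/-- Maximum element: no incoming arrows, and every element reachable from it. -/
def IsMaxElem {I X : Type*} (G : GoodGraph I X) (x0 : X) : Prop :=
  (∀ i, G.e i x0 = none) ∧ ∀ x, ∃ w : List I, chainOpt G.f w x0 = some x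

/-- Homogeneous local confluence property. -/
def HLC {I X : Type*} (G : GoodGraph I X) : Prop :=
  ∀ (x : X) (i j : I), i ≠ j → G.e i x ≠ none → G.e j x ≠ none →
    ∃ (w w' : List I) (z : X), 2 ≤ w.length ∧
      (w : Multiset I) = (w' : Multiset I) ∧
      w.getLast? = some i ∧ w'.getLast? = some j ∧
      chainOpt G.e w x = some z ∧ chainOpt G.e w' x = some z

def axS2 {I X : Type*} (A : I → I → ℤ) (G : GoodGraph I X) : Prop :=
  ∀ i j : I, i ≠ j → ∀ x y : X, G.e i x = some y →
    ((G.phi j y : ℤ) - G.phi j x) - ((G.eps j y : ℤ) - G.eps j x) = A j i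

def axS3 {I X : Type*} (G : GoodGraph I X) : Prop :=
  ∀ i j : I, i ≠ j → ∀ x y : X, G.e i x = some y →
    G.phi j y ≤ G.phi j x ∧ G.eps j x ≤ G.eps j y

def axS4 {I X : Type*} (G : GoodGraph I X) : Prop :=
  ∀ i j : I, i ≠ j → ∀ x xi xj : X, G.e i x = some xi → G.e j x = some xj →
    ((G.eps j xi = G.eps j x →
        ∃ z, G.e j xi = some z ∧ G.e i xj = some z ∧ G.phi i xi = G.phi i z) ∧
     (G.eps j xi = G.eps j x + 1 → G.eps i xj = G.eps i x + 1 →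
        ∃ z zi zj, chainOpt G.e [i, j, j, i] x = some z ∧
          chainOpt G.e [j, i, i, j] x = some z ∧
          G.f i z = some zi ∧ G.f j z = some zj ∧
          G.phi j zi = G.phi j z + 1 ∧ G.phi i zj = G.phi i z + 1))

def axS5 {I X : Type*} (G : GoodGraph I X) : Prop :=
  ∀ i j : I, i ≠ j → ∀ x xi xj : X, G.f i x = some xi → G.f j x = some xj →
    ((G.phi j xi = G.phi j x →
        ∃ z, G.f j xi = some z ∧ G.f i xj = some z ∧ G.eps i xi = G.eps i z) ∧
     (G.phi j xi = G.phi j x + 1 → G.phi i xj = G.phi i x + 1 →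
        ∃ z zi zj, chainOpt G.f [i, j, j, i] x = some z ∧
          chainOpt G.f [j, i, i, j] x = some z ∧
          G.e i z = some zi ∧ G.e j z = some zj ∧
          G.eps j zi = G.eps j z + 1 ∧ G.eps i zj = G.eps i z + 1))

/-- `X` is `A`-regular. -/
def ARegular {I X : Type*} (A : I → I → ℤ) (G : GoodGraph I X) : Prop :=
  axS2 A G ∧ axS3 G ∧ axS4 G ∧ axS5 G

/-- (S6), for the ordered pair (i,j) with a_{ij} = -2, a_{ji} = -1. -/
def axS6 {I X : Type*} (G : GoodGraph I X) (i j : I) : Prop :=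
  ∀ x xi xj : X, G.e i x = some xi → G.e j x = some xj →
    G.eps j xi = G.eps j x + 1 → G.eps i xj = G.eps i x + 2 →
    ∃ y y', chainOpt G.e [i, i, j] x = some y ∧
      chainOpt G.e [i, i, j, j, i] x = some y' ∧
      ∀ fy fy', G.f i y = some fy → G.f i y' = some fy' →
        (¬ (G.phi j fy = G.phi j y + 1 ∧ G.phi j fy' = G.phi j y')) ∧
        (G.phi j fy = G.phi j y + 1 → G.phi j fy' = G.phi j y' + 1 →
          ∃ t, G.e i y = some t ∧ G.f j y' = some t ∧ G.phi i t = G.phi i y' + 1) ∧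
        (G.phi j fy = G.phi j y → G.phi j fy' = G.phi j y' + 1 →
          ∃ z zi zj, chainOpt G.e [j, i, i, i, j, j, i] x = some z ∧
            chainOpt G.e [i, j, j, i, i, i, j] x = some z ∧
            G.f i z = some zi ∧ G.f j z = some zj ∧
            G.phi j zi = G.phi j z + 1 ∧ G.phi i zj = G.phi i z + 2) ∧
        (G.phi j fy = G.phi j y → G.phi j fy' = G.phi j y' →
          ∃ t, G.e i y = some t ∧ G.f j y' = some t ∧ G.phi i t = G.phi i y' + 2 ∧
            ∃ u v, chainOpt G.f [i, i] y' = some u ∧ G.f j u = some v ∧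
              G.phi i v = G.phi i u)

/-- (S7). -/
def axS7 {I X : Type*} (G : GoodGraph I X) (i j : I) : Prop :=
  ∀ x xi xj : X, G.f i x = some xi → G.f j x = some xj →
    G.phi j xi = G.phi j x + 1 → G.phi i xj = G.phi i x + 2 →
    ∃ y y', chainOpt G.f [i, i, j] x = some y ∧
      chainOpt G.f [i, i, j, j, i] x = some y' ∧
      ∀ ey ey', G.e i y = some ey → G.e i y' = some ey' →
        G.eps j ey = G.eps j y → G.eps j ey' = G.eps j y' + 1 →
        ∃ z, chainOpt G.f [j, i, i, i, j, j, i] x = some z ∧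
          chainOpt G.f [i, j, j, i, i, i, j] x = some z

/-- (S8). -/
def axS8 {I X : Type*} (G : GoodGraph I X) (i j : I) : Prop :=
  ∀ x xi xj : X, G.f i x = some xi → G.f j x = some xj →
    G.phi j xi = G.phi j x + 1 → G.phi i xj = G.phi i x + 1 → 2 ≤ G.phi i x →
    ∃ z, chainOpt G.f [i, j, j, i, i] x = some z ∧
      chainOpt G.f [j, i, i, i, j] x = some z

/-- (S9). -/
def axS9 {I X : Type*} (G : GoodGraph I X) (i j : I) : Prop :=
  ∀ x xi xj : X, G.f i x = some xi → G.f j x = some xj →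
    G.phi j xi = G.phi j x → G.phi i xj = G.phi i x + 2 →
    ∀ v u, chainOpt G.f [i, i] x = some v → G.f j v = some u → G.phi i u = G.phi i v →
    ∃ z, chainOpt G.f [i, j, j, i, i] x = some z ∧
      chainOpt G.f [j, i, i, i, j] x = some z

def IsGCM {I : Type*} (A : I → I → ℤ) : Prop :=
  (∀ i, A i i = 2) ∧ (∀ i j, i ≠ j → A i j ≤ 0) ∧ (∀ i j, A i j = 0 ↔ A j i = 0)

def IsSymmetrizable {I : Type*} (A : I → I → ℤ) : Prop :=
  ∃ d : I → ℤ, (∀ i, 0 < d i) ∧ ∀ i j, d i * A i j = d j * A j i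

/-- Every 2×2 principal submatrix of `A` is `A₁⊕A₁`, `A₂`, `B₂` or `ᵗB₂`. -/
def Rank2OK {I : Type*} (A : I → I → ℤ) : Prop :=
  ∀ i j, i ≠ j →
    (A i j = 0 ∧ A j i = 0) ∨ (A i j = -1 ∧ A j i = -1) ∨
    (A i j = -2 ∧ A j i = -1) ∨ (A i j = -1 ∧ A j i = -2)

/-- (S6)--(S9) hold for every ordered pair with `A|_{i,j} = B₂`. -/
def ExtraB2 {I X : Type*} (A : I → I → ℤ) (G : GoodGraph I X) : Prop :=
  ∀ i j, A i j = -2 → A j i = -1 →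
    axS6 G i j ∧ axS7 G i j ∧ axS8 G i j ∧ axS9 G i j

section Iterate

variable {X : Type*} {g : X → Option X}

theorem iterOpt_add (m n : ℕ) (x : X) :
    iterOpt g (m + n) x = (iterOpt g m x).bind (iterOpt g n) := by
  induction m generalizing x with
  | zero => simp [iterOpt]
  | succ m ih =>
    rw [Nat.add_right_comm]
    cases hx : g x <;> simp [iterOpt, hx, ih]

theorem iterOpt_eq_none_of_le {m n : ℕ} {x : X} (hmn : m ≤ n) (h : iterOpt g m x = none) :
    iterOpt g n x = none := by
  obtain ⟨k, rfl⟩ := Nat.exists_eq_add_of_le hmn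
  rw [iterOpt_add, h, Option.bind_none]

theorem eq_of_iterOpt_last {m n : ℕ} {x : X}
    (hm : iterOpt g m x ≠ none) (hm' : iterOpt g (m + 1) x = none)
    (hn : iterOpt g n x ≠ none) (hn' : iterOpt g (n + 1) x = none) : m = n := by
  by_contra hne
  rcases Nat.lt_or_gt_of_ne hne with h | h
  · exact hn (iterOpt_eq_none_of_le h hm')
  · exact hm (iterOpt_eq_none_of_le h hn')

end Iterate

namespace GoodGraph

variable {I X : Type*} (G : GoodGraph I X) {i : I} {x y : X}

theorem eps_eq_of_e (h : G.e i x = some y) : G.eps i x = G.eps i y + 1 :=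
  eq_of_iterOpt_last (G.eps_ne i x) (G.eps_top i x)
    (by simpa [iterOpt, h] using G.eps_ne i y) (by simpa [iterOpt, h] using G.eps_top i y)

theorem phi_eq_of_f (h : G.f i x = some y) : G.phi i x = G.phi i y + 1 :=
  eq_of_iterOpt_last (G.phi_ne i x) (G.phi_top i x)
    (by simpa [iterOpt, h] using G.phi_ne i y) (by simpa [iterOpt, h] using G.phi_top i y)

theorem eps_of_f (h : G.f i x = some y) : G.eps i y = G.eps i x + 1 :=
  G.eps_eq_of_e ((G.ef i x y).2 h)

theorem eps_eq_zero_iff : G.eps i x = 0 ↔ G.e i x = none := by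
  refine ⟨fun h => ?_, fun h => eq_of_iterOpt_last (G.eps_ne i x) (G.eps_top i x)
    (by simp [iterOpt]) (by simp [iterOpt, h])⟩
  cases hx : G.e i x with
  | none => rfl
  | some y => have := G.eps_eq_of_e hx; omega

theorem phi_eq_zero_iff : G.phi i x = 0 ↔ G.f i x = none := by
  refine ⟨fun h => ?_, fun h => eq_of_iterOpt_last (G.phi_ne i x) (G.phi_top i x)
    (by simp [iterOpt]) (by simp [iterOpt, h])⟩
  cases hx : G.f i x with
  | none => rfl
  | some y => have := G.phi_eq_of_f hx; omega

theorem exists_f_of_phi_ne_zero (h : G.phi i x ≠ 0) : ∃ y, G.f i x = some y :=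
  Option.ne_none_iff_exists'.1 fun hx => h (G.phi_eq_zero_iff.2 hx)

theorem f_injective {z : X} (hx : G.f i x = some z) (hy : G.f i y = some z) : x = y :=
  Option.some.inj (((G.ef i x z).2 hx).symm.trans ((G.ef i y z).2 hy))

end GoodGraph

section Chain

variable {I X : Type*} {g : I → X → Option X} {a : I} {v w : List I} {x y z : X}

@[simp] theorem chainOpt_nil : chainOpt g [] x = some x := rfl

@[simp] theorem chainOpt_cons : chainOpt g (a :: w) x = (chainOpt g w x).bind (g a) := rfl

theorem chainOpt_append : chainOpt g (v ++ w) x = (chainOpt g w x).bind (chainOpt g v) := by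
  induction v with
  | nil => cases h : chainOpt g w x <;> simp [h]
  | cons b v ih => cases h : chainOpt g w x <;> simp_all

theorem chainOpt_concat : chainOpt g (w ++ [a]) x = (g a x).bind (chainOpt g w) := by
  simp [chainOpt_append]

theorem chainOpt_append_of_eq_some (h : chainOpt g w x = some y) :
    chainOpt g (v ++ w) x = chainOpt g v y := by
  rw [chainOpt_append, h, Option.bind_some]

theorem chainOpt_cons_of_eq_some (h : chainOpt g w x = some y) :
    chainOpt g (a :: w) x = g a y := by
  rw [chainOpt_cons, h, Option.bind_some]

theorem chainOpt_cons_eq_some_iff :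
    chainOpt g (a :: w) x = some z ↔ ∃ y, chainOpt g w x = some y ∧ g a y = some z :=
  Option.bind_eq_some_iff

theorem chainOpt_concat_of_eq_some (h : g a x = some y) :
    chainOpt g (w ++ [a]) x = chainOpt g w y := by
  rw [chainOpt_concat, h, Option.bind_some]

theorem chainOpt_reverse_of_inverse {g' : I → X → Option X}
    (hinv : ∀ a x y, g a x = some y → g' a y = some x) (h : chainOpt g w x = some z) :
    chainOpt g' w.reverse z = some x := by
  induction w generalizing z with
  | nil => simpa using h.symm
  | cons a w ih =>
    obtain ⟨y, hy, hz⟩ := Option.bind_eq_some_iff.1 h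
    rw [List.reverse_cons, chainOpt_concat_of_eq_some (hinv a y z hz)]
    exact ih hy

end Chain

namespace GoodGraph

variable {I X : Type*} (G : GoodGraph I X) {a : I} {v w : List I} {x x1 y z : X}

theorem chainOpt_f_reverse (h : chainOpt G.e w x = some z) : chainOpt G.f w.reverse z = some x :=
  chainOpt_reverse_of_inverse (fun a x y => (G.ef a y x).1) h

theorem chainOpt_e_reverse (h : chainOpt G.f w x = some z) : chainOpt G.e w.reverse z = some x :=
  chainOpt_reverse_of_inverse (fun a x y => (G.ef a x y).2) h

theorem chainOpt_f_of_e_append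
    (h : chainOpt G.e (v.reverse ++ w) x = some z) (hw : chainOpt G.e w x = some y) :
    chainOpt G.f v z = some y := by
  rw [chainOpt_append_of_eq_some hw] at h
  simpa using G.chainOpt_f_reverse h

theorem chainOpt_f_of_e_concat (ha : G.e a x = some x1)
    (h : chainOpt G.e (w.reverse ++ [a]) x = some z) : chainOpt G.f w z = some x1 :=
  G.chainOpt_f_of_e_append h ha

/-- `φ_i (f̃_w z)`, or `none` when `f̃_w z` is undefined: an equation between such values also
records definedness. -/
def phiAfter (w : List I) (i : I) (z : X) : Option ℕ := (chainOpt G.f w z).map (G.phi i)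

def epsAfter (w : List I) (i : I) (z : X) : Option ℕ := (chainOpt G.f w z).map (G.eps i)

end GoodGraph

section UpperConfig

variable {I X Y : Type*} {A : I → I → ℤ} {G : GoodGraph I X} {G' : GoodGraph I Y} {i j : I}
  {x x1 x2 : X}

theorem exists_deltas_of_e (hS2 : axS2 A G) (hS3 : axS3 G) (hij : i ≠ j) {y : X}
    (h : G.e i x = some y) :
    ∃ a b : ℕ, G.eps j y = G.eps j x + a ∧ G.phi j x = G.phi j y + b ∧
      (a + b : ℤ) = -A j i := by
  have h2 := hS2 i j hij x y h
  have h3 := hS3 i j hij x y h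
  exact ⟨G.eps j y - G.eps j x, G.phi j x - G.phi j y, by omega, by omega, by omega⟩

/-- The ways in which `x1` and `x2` can sit below a common element `z`, each one a relation
of the paper: `square` is (A), `octagon` is (B), `decagonP` and `decagonR` are (P) and (R),
`tetradecagon` is (Q). In each case `f̃_i x1 = f̃_j x2` is forced by (S5), (S8), (S9) or (S7). -/
inductive UpperConfig (A : I → I → ℤ) (G : GoodGraph I X) (i j : I) (x1 x2 : X) : Prop
  | square (z : X) (hu : chainOpt G.f [j] z = some x1) (hv : chainOpt G.f [i] z = some x2)
      (hφ : G.phiAfter [j] i z = G.phiAfter [] i z)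
  | octagon (z : X) (hu : chainOpt G.f [j, j, i] z = some x1)
      (hv : chainOpt G.f [i, i, j] z = some x2)
      (hφi : G.phiAfter [i] j z = (G.phiAfter [] j z).map (· + 1))
      (hφj : G.phiAfter [j] i z = (G.phiAfter [] i z).map (· + 1))
  | decagonP (hAij : A i j = -2) (hAji : A j i = -1) (z : X)
      (hu : chainOpt G.f [j, j, i, i] z = some x1) (hv : chainOpt G.f [i, i, i, j] z = some x2)
      (hφi : G.phiAfter [i] j z = (G.phiAfter [] j z).map (· + 1))
      (hφj : G.phiAfter [j] i z = (G.phiAfter [] i z).map (· + 1))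
  | decagonR (hAij : A i j = -2) (hAji : A j i = -1) (z : X)
      (hu : chainOpt G.f [j, j, i, i] z = some x1) (hv : chainOpt G.f [i, i, i, j] z = some x2)
      (hφi : G.phiAfter [i] j z = G.phiAfter [] j z)
      (hφj : G.phiAfter [j] i z = (G.phiAfter [] i z).map (· + 2))
      (hφii : G.phiAfter [j, i, i] i z = G.phiAfter [i, i] i z)
  | tetradecagon (hAij : A i j = -2) (hAji : A j i = -1) (z : X)
      (hu : chainOpt G.f [j, j, i, i, i, j] z = some x1)
      (hv : chainOpt G.f [i, i, i, j, j, i] z = some x2)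
      (hφi : G.phiAfter [i] j z = (G.phiAfter [] j z).map (· + 1))
      (hφj : G.phiAfter [j] i z = (G.phiAfter [] i z).map (· + 2))
      (hε : G.epsAfter [i, j] j z = G.epsAfter [i, i, j] j z)
      (hε' : G.epsAfter [i, j, j, i] j z = (G.epsAfter [i, i, j, j, i] j z).map (· + 1))

theorem upperConfig_of_axS4_square (hS4 : axS4 G) (hij : i ≠ j) (h1 : G.e i x = some x1)
    (h2 : G.e j x = some x2) (h : G.eps j x1 = G.eps j x) : UpperConfig A G i j x1 x2 := by
  obtain ⟨z, hz1, hz2, hφ⟩ := (hS4 i j hij x x1 x2 h1 h2).1 h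
  have hf1 := (G.ef j z x1).1 hz1
  exact .square z (by simpa using hf1) (by simpa using (G.ef i z x2).1 hz2)
    (by simp [GoodGraph.phiAfter, hf1, hφ])

theorem upperConfig_of_axS4_octagon (hS4 : axS4 G) (hij : i ≠ j) (h1 : G.e i x = some x1)
    (h2 : G.e j x = some x2) (ha : G.eps j x1 = G.eps j x + 1) (hb : G.eps i x2 = G.eps i x + 1) :
    UpperConfig A G i j x1 x2 := by
  obtain ⟨z, zi, zj, hz1, hz2, hzi, hzj, hφi, hφj⟩ := (hS4 i j hij x x1 x2 h1 h2).2 ha hb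
  exact .octagon z (G.chainOpt_f_of_e_concat h1 hz1) (G.chainOpt_f_of_e_concat h2 hz2)
    (by simp [GoodGraph.phiAfter, hzi, hφi]) (by simp [GoodGraph.phiAfter, hzj, hφj])

theorem upperConfig_of_axS6 (hS2 : axS2 A G) (hS3 : axS3 G) (hS6 : axS6 G i j) (hij : i ≠ j)
    (hAij : A i j = -2) (hAji : A j i = -1) (h1 : G.e i x = some x1) (h2 : G.e j x = some x2)
    (ha : G.eps j x1 = G.eps j x + 1) (hb : G.eps i x2 = G.eps i x + 2) :
    UpperConfig A G i j x1 x2 := by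
  obtain ⟨y, y', hy, hy', hcases⟩ := hS6 x x1 x2 h1 h2 ha hb
  obtain ⟨fy, -, hyfy⟩ := chainOpt_cons_eq_some_iff.1 hy
  obtain ⟨fy', -, hyfy'⟩ := chainOpt_cons_eq_some_iff.1 hy'
  have hf := (G.ef i y fy).1 hyfy
  have hf' := (G.ef i y' fy').1 hyfy'
  obtain ⟨c, d, hc, hd, hcd⟩ := exists_deltas_of_e hS2 hS3 hij hyfy
  obtain ⟨c', d', hc', hd', hcd'⟩ := exists_deltas_of_e hS2 hS3 hij hyfy'
  obtain ⟨hne, hP, hQ, hR⟩ := hcases fy fy' hf hf'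
  have hu : chainOpt G.f [j, j, i, i] y' = some x1 := G.chainOpt_f_of_e_concat h1 hy'
  -- in (P) and (R) the element `t = ẽ_i y = f̃_j y'` closes the second side
  have hv : ∀ t, G.e i y = some t → G.f j y' = some t →
      chainOpt G.f [i, i, i, j] y' = some x2 :=
    fun t hyt hty' => G.chainOpt_f_of_e_concat h2 <| by
      show chainOpt G.e [j, i, i, i, j] x = some y'
      rw [chainOpt_cons_of_eq_some (by rw [chainOpt_cons_of_eq_some hy]; exact hyt)]
      exact (G.ef j y' t).2 hty'
  rw [hAji] at hcd hcd'
  rcases (by omega : d = 0 ∨ d = 1) with rfl | rfl <;>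
    rcases (by omega : d' = 0 ∨ d' = 1) with rfl | rfl
  · obtain ⟨t, hyt, hty', hφt, u, v, hu', hv', hφuv⟩ := hR (by omega) (by omega)
    refine .decagonR hAij hAji y' hu (hv t hyt hty') (by simp [GoodGraph.phiAfter, hf', hd'])
      (by simp [GoodGraph.phiAfter, hty', hφt]) ?_
    simp only [GoodGraph.phiAfter, chainOpt_cons_of_eq_some hu', hv', hu', Option.map_some, hφuv]
  · obtain ⟨z, zi, zj, hz1, hz2, hzi, hzj, hφi, hφj⟩ := hQ (by omega) (by omega)
    have hzy' : chainOpt G.f [i, j] z = some y' := G.chainOpt_f_of_e_append hz1 hy'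
    have hzy : chainOpt G.f [i, j, j, i] z = some y := G.chainOpt_f_of_e_append hz2 hy
    refine .tetradecagon hAij hAji z (G.chainOpt_f_of_e_concat h1 hz1)
      (G.chainOpt_f_of_e_concat h2 hz2) (by simp [GoodGraph.phiAfter, hzi, hφi])
      (by simp [GoodGraph.phiAfter, hzj, hφj]) ?_ ?_
    · simp only [GoodGraph.epsAfter, hzy', chainOpt_cons_of_eq_some hzy', hf', Option.map_some]
      congr 1; omega
    · simp only [GoodGraph.epsAfter, hzy, chainOpt_cons_of_eq_some hzy, hf, Option.map_some]
      congr 1; omega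
  · exact absurd ⟨by omega, by omega⟩ hne
  · obtain ⟨t, hyt, hty', hφt⟩ := hP (by omega) (by omega)
    exact .decagonP hAij hAji y' hu (hv t hyt hty') (by simp [GoodGraph.phiAfter, hf', hd'])
      (by simp [GoodGraph.phiAfter, hty', hφt])

theorem upperConfig_or_of_e (hrk : Rank2OK A) (hreg : ARegular A G) (hex : ExtraB2 A G)
    (hij : i ≠ j) (h1 : G.e i x = some x1) (h2 : G.e j x = some x2) :
    UpperConfig A G i j x1 x2 ∨ UpperConfig A G j i x2 x1 := by
  obtain ⟨hS2, hS3, hS4, -⟩ := hreg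
  obtain ⟨a1, b1, ha1, -, hab1⟩ := exists_deltas_of_e hS2 hS3 hij h1
  obtain ⟨a2, b2, ha2, -, hab2⟩ := exists_deltas_of_e hS2 hS3 hij.symm h2
  by_cases h0 : a1 = 0
  · exact .inl (upperConfig_of_axS4_square hS4 hij h1 h2 (by omega))
  by_cases h0' : a2 = 0
  · exact .inr (upperConfig_of_axS4_square hS4 hij.symm h2 h1 (by omega))
  by_cases h11 : a1 = 1 ∧ a2 = 1
  · exact .inl (upperConfig_of_axS4_octagon hS4 hij h1 h2 (by omega) (by omega))
  rcases hrk i j hij with ⟨hAij, hAji⟩ | ⟨hAij, hAji⟩ | ⟨hAij, hAji⟩ | ⟨hAij, hAji⟩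
  · omega
  · omega
  · exact .inl (upperConfig_of_axS6 hS2 hS3 (hex i j hAij hAji).1 hij hAij hAji h1 h2
      (by omega) (by omega))
  · exact .inr (upperConfig_of_axS6 hS2 hS3 (hex j i hAji hAij).1 hij.symm hAji hAij h2 h1
      (by omega) (by omega))

theorem exists_f_eq_of_chainOpt_cons {z : X} {u v : List I}
    (hu : chainOpt G.f u z = some x1) (hv : chainOpt G.f v z = some x2)
    (h : ∃ y, chainOpt G.f (i :: u) z = some y ∧ chainOpt G.f (j :: v) z = some y) :
    ∃ y, G.f i x1 = some y ∧ G.f j x2 = some y := by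
  simpa only [chainOpt_cons_of_eq_some hu, chainOpt_cons_of_eq_some hv] using h

theorem exists_f_eq_of_axS7 (hS7 : axS7 G i j) {z : X}
    (hu : chainOpt G.f [j, j, i, i, i, j] z = some x1)
    (hv : chainOpt G.f [i, i, i, j, j, i] z = some x2)
    (hφi : G.phiAfter [i] j z = (G.phiAfter [] j z).map (· + 1))
    (hφj : G.phiAfter [j] i z = (G.phiAfter [] i z).map (· + 2))
    (hε : G.epsAfter [i, j] j z = G.epsAfter [i, i, j] j z)
    (hε' : G.epsAfter [i, j, j, i] j z = (G.epsAfter [i, i, j, j, i] j z).map (· + 1)) :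
    ∃ y, G.f i x1 = some y ∧ G.f j x2 = some y := by
  obtain ⟨zi, hzi, hφzi⟩ := by simpa [GoodGraph.phiAfter] using hφi
  obtain ⟨zj, hzj, hφzj⟩ := by simpa [GoodGraph.phiAfter] using hφj
  obtain ⟨y, y', hy, hy', hS7⟩ := hS7 z zi zj hzi hzj hφzi hφzj
  obtain ⟨ey, hey, hεey⟩ := by
    simpa only [GoodGraph.epsAfter, hy, Option.map_some, Option.map_eq_some_iff] using hε
  obtain ⟨ey', hey', hεey'⟩ := by
    simpa only [GoodGraph.epsAfter, hy', Option.map_some, Option.map_eq_some_iff] using hε'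
  have hyey : G.e i y = some ey := (G.ef i ey y).2 (by rwa [chainOpt_cons_of_eq_some hey] at hy)
  have hyey' : G.e i y' = some ey' :=
    (G.ef i ey' y').2 (by rwa [chainOpt_cons_of_eq_some hey'] at hy')
  obtain ⟨w, hw1, hw2⟩ := hS7 ey ey' hyey hyey' hεey hεey'
  exact exists_f_eq_of_chainOpt_cons hu hv ⟨w, hw2, hw1⟩

theorem UpperConfig.exists_f_eq (hS5 : axS5 G) (hex : ExtraB2 A G) (hij : i ≠ j)
    (h : UpperConfig A G i j x1 x2) : ∃ y, G.f i x1 = some y ∧ G.f j x2 = some y := by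
  cases h with
  | square z hu hv hφ =>
    have hu : G.f j z = some x1 := hu
    obtain ⟨y, hy1, hy2, -⟩ :=
      (hS5 j i hij.symm z x1 x2 hu hv).1 (by simpa [GoodGraph.phiAfter, hu] using hφ)
    exact ⟨y, hy1, hy2⟩
  | octagon z hu hv hφi hφj =>
    obtain ⟨zi, hzi, hφzi⟩ := by simpa [GoodGraph.phiAfter] using hφi
    obtain ⟨zj, hzj, hφzj⟩ := by simpa [GoodGraph.phiAfter] using hφj
    obtain ⟨y, -, -, hy1, hy2, -⟩ := (hS5 i j hij z zi zj hzi hzj).2 hφzi hφzj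
    exact exists_f_eq_of_chainOpt_cons hu hv ⟨y, hy1, hy2⟩
  | decagonP hAij hAji z hu hv hφi hφj =>
    obtain ⟨zi, hzi, hφzi⟩ := by simpa [GoodGraph.phiAfter] using hφi
    obtain ⟨zj, hzj, hφzj⟩ := by simpa [GoodGraph.phiAfter] using hφj
    have h2 : 2 ≤ G.phi i z := by
      obtain ⟨p, hp, -⟩ := chainOpt_cons_eq_some_iff.1 hu
      obtain ⟨q, hq, -⟩ := chainOpt_cons_eq_some_iff.1 hp
      have hzq : G.f i zi = some q := by simpa [hzi] using hq
      have := G.phi_eq_of_f hzi; have := G.phi_eq_of_f hzq; omega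
    exact exists_f_eq_of_chainOpt_cons hu hv
      ((hex i j hAij hAji).2.2.1 z zi zj hzi hzj hφzi hφzj h2)
  | decagonR hAij hAji z hu hv hφi hφj hφii =>
    obtain ⟨zi, hzi, hφzi⟩ := by simpa [GoodGraph.phiAfter] using hφi
    obtain ⟨zj, hzj, hφzj⟩ := by simpa [GoodGraph.phiAfter] using hφj
    obtain ⟨p, hp, -⟩ := chainOpt_cons_eq_some_iff.1 hu
    obtain ⟨q, hq, hqp⟩ := chainOpt_cons_eq_some_iff.1 hp
    refine exists_f_eq_of_chainOpt_cons hu hv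
      ((hex i j hAij hAji).2.2.2 z zi zj hzi hzj hφzi hφzj q p hq hqp ?_)
    simpa only [GoodGraph.phiAfter, chainOpt_cons_of_eq_some (a := j) hq, hq, hqp,
      Option.map_some, Option.some.injEq] using hφii
  | tetradecagon hAij hAji z hu hv hφi hφj hε hε' =>
    exact exists_f_eq_of_axS7 (hex i j hAij hAji).2.1 hu hv hφi hφj hε hε'

theorem UpperConfig.exists_top (h : UpperConfig A G i j x1 x2) :
    ∃ z u v, chainOpt G.f u z = some x1 ∧ chainOpt G.f v z = some x2 ∧
      u.length = v.length := by
  cases h with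
  | square z hu hv => exact ⟨z, _, _, hu, hv, rfl⟩
  | octagon z hu hv => exact ⟨z, _, _, hu, hv, rfl⟩
  | decagonP _ _ z hu hv => exact ⟨z, _, _, hu, hv, rfl⟩
  | decagonR _ _ z hu hv => exact ⟨z, _, _, hu, hv, rfl⟩
  | tetradecagon _ _ z hu hv => exact ⟨z, _, _, hu, hv, rfl⟩

structure ProfileAgree (G : GoodGraph I X) (G' : GoodGraph I Y) (k : ℕ) (z : X) (Z : Y) :
    Prop where
  phi : ∀ w : List I, w.length ≤ k → ∀ a, G.phiAfter w a z = G'.phiAfter w a Z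
  eps : ∀ w : List I, w.length ≤ k → ∀ a, G.epsAfter w a z = G'.epsAfter w a Z

theorem UpperConfig.transfer {y1 y2 : Y} (h : UpperConfig A G i j x1 x2)
    (htop : ∀ z u v, chainOpt G.f u z = some x1 → chainOpt G.f v z = some x2 →
      ∃ Z, chainOpt G'.f u Z = some y1 ∧ chainOpt G'.f v Z = some y2 ∧
        ProfileAgree G G' u.length z Z) :
    UpperConfig A G' i j y1 y2 := by
  cases h with
  | square z hu hv hφ =>
    obtain ⟨Z, hu', hv', hZ⟩ := htop z _ _ hu hv
    exact .square Z hu' hv' (by simpa (disch := simp) only [hZ.phi] using hφ)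
  | octagon z hu hv hφi hφj =>
    obtain ⟨Z, hu', hv', hZ⟩ := htop z _ _ hu hv
    exact .octagon Z hu' hv' (by simpa (disch := simp) only [hZ.phi] using hφi)
      (by simpa (disch := simp) only [hZ.phi] using hφj)
  | decagonP hAij hAji z hu hv hφi hφj =>
    obtain ⟨Z, hu', hv', hZ⟩ := htop z _ _ hu hv
    exact .decagonP hAij hAji Z hu' hv' (by simpa (disch := simp) only [hZ.phi] using hφi)
      (by simpa (disch := simp) only [hZ.phi] using hφj)
  | decagonR hAij hAji z hu hv hφi hφj hφii =>
    obtain ⟨Z, hu', hv', hZ⟩ := htop z _ _ hu hv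
    exact .decagonR hAij hAji Z hu' hv' (by simpa (disch := simp) only [hZ.phi] using hφi)
      (by simpa (disch := simp) only [hZ.phi] using hφj)
      (by simpa (disch := simp) only [hZ.phi] using hφii)
  | tetradecagon hAij hAji z hu hv hφi hφj hε hε' =>
    obtain ⟨Z, hu', hv', hZ⟩ := htop z _ _ hu hv
    exact .tetradecagon hAij hAji Z hu' hv' (by simpa (disch := simp) only [hZ.phi] using hφi)
      (by simpa (disch := simp) only [hZ.phi] using hφj)
      (by simpa (disch := simp) only [hZ.eps] using hε)
      (by simpa (disch := simp) only [hZ.eps] using hε')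

end UpperConfig

section Graded

variable {I X : Type*} {g : I → X → Option X} {x0 : X}

def EqualLengthConfluent (g : I → X → Option X) : Prop :=
  ∀ x a b xa xb, a ≠ b → g a x = some xa → g b x = some xb →
    ∃ z w w', chainOpt g w xa = some z ∧ chainOpt g w' xb = some z ∧ w.length = w'.length

theorem exists_chainOpt_completion (hconf : EqualLengthConfluent g)
    (hterm : ∀ a, g a x0 = none) (n : ℕ) :
    ∀ x s, s.length = n → chainOpt g s x = some x0 → ∀ t z, chainOpt g t x = some z →
      ∃ t', chainOpt g t' z = some x0 ∧ t'.length + t.length = n := by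
  induction n using Nat.strong_induction_on with
  | _ n ih =>
  intro x s hs hsx t z htz
  rcases t.eq_nil_or_concat with rfl | ⟨t, a, rfl⟩
  · obtain rfl : x = z := by simpa using htz
    exact ⟨s, hsx, by simpa using hs⟩
  rw [List.concat_eq_append, chainOpt_concat] at htz
  obtain ⟨xa, hxa, htz⟩ := Option.bind_eq_some_iff.1 htz
  rcases s.eq_nil_or_concat with rfl | ⟨s, b, rfl⟩
  · obtain rfl : x = x0 := by simpa using hsx
    simp [hterm a] at hxa
  rw [List.concat_eq_append, chainOpt_concat] at hsx
  obtain ⟨xb, hxb, hsx⟩ := Option.bind_eq_some_iff.1 hsx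
  simp only [List.concat_eq_append, List.length_append, List.length_singleton] at hs ⊢
  by_cases hab : a = b
  · subst hab
    obtain rfl : xa = xb := Option.some.inj (hxa.symm.trans hxb)
    obtain ⟨t', ht', hlen⟩ := ih s.length (by omega) xa s rfl hsx t z htz
    exact ⟨t', ht', by omega⟩
  -- Newman's argument: close the fork `a ≠ b` at `x`, then use the induction hypothesis twice.
  obtain ⟨zc, w, w', hw, hw', hlen⟩ := hconf x b a xb xa (Ne.symm hab) hxb hxa
  obtain ⟨r, hr, hrlen⟩ := ih s.length (by omega) xb s rfl hsx w zc hw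
  obtain ⟨t', ht', hlen'⟩ := ih s.length (by omega) xa (r ++ w')
    (by rw [List.length_append]; omega) (by rw [chainOpt_append_of_eq_some hw', hr]) t z htz
  exact ⟨t', ht', by omega⟩

theorem length_eq_of_chainOpt_eq_terminal (hconf : EqualLengthConfluent g)
    (hterm : ∀ a, g a x0 = none) {x : X} {s t : List I} (hs : chainOpt g s x = some x0)
    (ht : chainOpt g t x = some x0) : s.length = t.length := by
  obtain ⟨t', ht', hlen⟩ := exists_chainOpt_completion hconf hterm _ x s rfl hs t x0 ht
  rcases t'.eq_nil_or_concat with rfl | ⟨t', a, rfl⟩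
  · simpa using hlen.symm
  · rw [List.concat_eq_append, chainOpt_concat, hterm a] at ht'
    simp at ht'

end Graded

structure IsRegularHighestWeight {I X : Type*} (A : I → I → ℤ) (G : GoodGraph I X) (x0 : X) :
    Prop where
  rank2 : Rank2OK A
  regular : ARegular A G
  extra : ExtraB2 A G
  max : IsMaxElem G x0

/-- The length of some path from the maximum element to `x`; by
`IsRegularHighestWeight.length_eq` all such paths have the same length. -/
noncomputable def IsMaxElem.level {I X : Type*} {G : GoodGraph I X} {x0 : X}
    (hmax : IsMaxElem G x0) (x : X) : ℕ :=
  (hmax.2 x).choose.length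

namespace IsRegularHighestWeight

variable {I X : Type*} {A : I → I → ℤ} {G : GoodGraph I X} {x0 : X}

theorem equalLengthConfluent_e (hG : IsRegularHighestWeight A G x0) :
    EqualLengthConfluent G.e := by
  intro x a b xa xb hab ha hb
  rcases upperConfig_or_of_e hG.rank2 hG.regular hG.extra hab ha hb with h | h
  · obtain ⟨z, u, v, hu, hv, hl⟩ := h.exists_top
    exact ⟨z, _, _, G.chainOpt_e_reverse hu, G.chainOpt_e_reverse hv, by simp [hl]⟩
  · obtain ⟨z, u, v, hu, hv, hl⟩ := h.exists_top
    exact ⟨z, _, _, G.chainOpt_e_reverse hv, G.chainOpt_e_reverse hu, by simp [hl]⟩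

theorem length_eq (hG : IsRegularHighestWeight A G x0) {u v : List I} {x : X}
    (hu : chainOpt G.f u x0 = some x) (hv : chainOpt G.f v x0 = some x) :
    u.length = v.length := by
  simpa using length_eq_of_chainOpt_eq_terminal hG.equalLengthConfluent_e hG.max.1
    (G.chainOpt_e_reverse hu) (G.chainOpt_e_reverse hv)

theorem level_eq (hG : IsRegularHighestWeight A G x0) {w : List I} {x : X}
    (hw : chainOpt G.f w x0 = some x) : hG.max.level x = w.length :=
  hG.length_eq (hG.max.2 x).choose_spec hw

theorem level_chainOpt_f (hG : IsRegularHighestWeight A G x0) {w : List I} {x z : X}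
    (h : chainOpt G.f w z = some x) : hG.max.level x = hG.max.level z + w.length := by
  obtain ⟨v, hv⟩ := hG.max.2 z
  rw [hG.level_eq hv, hG.level_eq (w := w ++ v) (by rwa [chainOpt_append_of_eq_some hv]),
    List.length_append, add_comm]

theorem level_f (hG : IsRegularHighestWeight A G x0) {a : I} {x y : X} (h : G.f a x = some y) :
    hG.max.level y = hG.max.level x + 1 :=
  hG.level_chainOpt_f (w := [a]) h

theorem eq_of_level_eq_zero (hG : IsRegularHighestWeight A G x0) {x : X}
    (h : hG.max.level x = 0) : x = x0 := by
  obtain ⟨w, hw⟩ := hG.max.2 x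
  rw [hG.level_eq hw, List.length_eq_zero_iff] at h
  simpa [h] using hw.symm

end IsRegularHighestWeight

section WordRel

variable {I X Y : Type*} {A : I → I → ℤ} {G : GoodGraph I X} {G' : GoodGraph I Y} {x0 : X}
  {y0 : Y} {x x' : X} {y y' : Y}

def WordRel (G : GoodGraph I X) (G' : GoodGraph I Y) (x0 : X) (y0 : Y) (x : X) (y : Y) : Prop :=
  ∃ w, chainOpt G.f w x0 = some x ∧ chainOpt G'.f w y0 = some y

theorem WordRel.symm (h : WordRel G G' x0 y0 x y) : WordRel G' G y0 x0 y x :=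
  let ⟨w, hx, hy⟩ := h; ⟨w, hy, hx⟩

theorem WordRel.f {a : I} (h : WordRel G G' x0 y0 x y) (hx : G.f a x = some x')
    (hy : G'.f a y = some y') : WordRel G G' x0 y0 x' y' :=
  let ⟨w, hwx, hwy⟩ := h
  ⟨a :: w, by rwa [chainOpt_cons_of_eq_some hwx], by rwa [chainOpt_cons_of_eq_some hwy]⟩

/-- Along a common word, each step changes `φ_i - ε_i` by `-2` or `-a_{ia}` in both graphs. -/
theorem WordRel.phi_sub_eps_eq (hS2 : axS2 A G) (hS2' : axS2 A G')
    (h0 : ∀ i, (G.phi i x0 : ℤ) - G.eps i x0 = G'.phi i y0 - G'.eps i y0)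
    (h : WordRel G G' x0 y0 x y) (i : I) :
    (G.phi i x : ℤ) - G.eps i x = G'.phi i y - G'.eps i y := by
  obtain ⟨w, hx, hy⟩ := h
  induction w generalizing x y with
  | nil =>
    obtain rfl : x0 = x := by simpa using hx
    obtain rfl : y0 = y := by simpa using hy
    exact h0 i
  | cons a w ih =>
    obtain ⟨x1, hx1, hax⟩ := chainOpt_cons_eq_some_iff.1 hx
    obtain ⟨y1, hy1, hay⟩ := chainOpt_cons_eq_some_iff.1 hy
    have := ih hx1 hy1
    by_cases hia : i = a
    · subst hia
      have := G.phi_eq_of_f hax; have := G.eps_of_f hax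
      have := G'.phi_eq_of_f hay; have := G'.eps_of_f hay
      omega
    · have := hS2 a i (Ne.symm hia) x x1 ((G.ef a x1 x).2 hax)
      have := hS2' a i (Ne.symm hia) y y1 ((G'.ef a y1 y).2 hay)
      omega

theorem WordRel.level_eq (hG : IsRegularHighestWeight A G x0)
    (hG' : IsRegularHighestWeight A G' y0) (h : WordRel G G' x0 y0 x y) :
    hG.max.level x = hG'.max.level y := by
  obtain ⟨w, hx, hy⟩ := h
  rw [hG.level_eq hx, hG'.level_eq hy]

end WordRel

structure LevelIso {I X Y : Type*} {A : I → I → ℤ} {G : GoodGraph I X} {x0 : X}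
    (hG : IsRegularHighestWeight A G x0) (G' : GoodGraph I Y) (y0 : Y) (n : ℕ) : Prop where
  exists_rel : ∀ x, hG.max.level x ≤ n → ∃ y, WordRel G G' x0 y0 x y
  rel_unique : ∀ x y y', hG.max.level x ≤ n → WordRel G G' x0 y0 x y →
    WordRel G G' x0 y0 x y' → y = y'
  eps_eq : ∀ x y, hG.max.level x ≤ n → WordRel G G' x0 y0 x y →
    ∀ i, G.eps i x = G'.eps i y
  phi_eq : ∀ x y, hG.max.level x ≤ n → WordRel G G' x0 y0 x y →
    ∀ i, G.phi i x = G'.phi i y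

namespace LevelIso

variable {I X Y : Type*} {A : I → I → ℤ} {G : GoodGraph I X} {G' : GoodGraph I Y} {x0 : X}
  {y0 : Y} {n : ℕ} {x x1 x2 z : X} {y y1 y2 Z : Y}

theorem f_rel {hG : IsRegularHighestWeight A G x0} (hn : LevelIso hG G' y0 n) {a : I} {x' : X}
    (hx : hG.max.level x ≤ n) (hr : WordRel G G' x0 y0 x y) (h : G.f a x = some x') :
    ∃ y', G'.f a y = some y' ∧ WordRel G G' x0 y0 x' y' := by
  obtain ⟨y', hy'⟩ := G'.exists_f_of_phi_ne_zero (i := a) (x := y)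
    (by rw [← hn.phi_eq x y hx hr a, G.phi_eq_of_f h]; omega)
  exact ⟨y', hy', hr.f h hy'⟩

theorem chainOpt_rel {hG : IsRegularHighestWeight A G x0} (hn : LevelIso hG G' y0 n)
    {w : List I} (hz : hG.max.level z + w.length ≤ n) (hr : WordRel G G' x0 y0 z Z) :
    Option.Rel (WordRel G G' x0 y0) (chainOpt G.f w z) (chainOpt G'.f w Z) := by
  induction w with
  | nil => exact .some hr
  | cons a w ih =>
    simp only [List.length_cons] at hz
    have hrel := ih (by omega)
    rw [chainOpt_cons, chainOpt_cons]
    generalize hp : chainOpt G.f w z = o at hrel ⊢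
    generalize chainOpt G'.f w Z = O at hrel ⊢
    cases hrel with
    | none => exact .none
    | @some p P hpP =>
      have hlp : hG.max.level p ≤ n := by rw [hG.level_chainOpt_f hp]; omega
      rw [Option.bind_some, Option.bind_some]
      cases hq : G.f a p with
      | some q =>
        obtain ⟨Q, hQ, hqQ⟩ := hn.f_rel hlp hpP hq
        rw [hQ]
        exact .some hqQ
      | none =>
        rw [G'.phi_eq_zero_iff.1 (by rw [← hn.phi_eq p P hlp hpP, G.phi_eq_zero_iff.2 hq])]
        exact .none

theorem profileAgree {hG : IsRegularHighestWeight A G x0} (hn : LevelIso hG G' y0 n)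
    {k : ℕ} (hz : hG.max.level z + k ≤ n) (hr : WordRel G G' x0 y0 z Z) :
    ProfileAgree G G' k z Z := by
  suffices h : ∀ w : List I, w.length ≤ k → ∀ a,
      G.phiAfter w a z = G'.phiAfter w a Z ∧ G.epsAfter w a z = G'.epsAfter w a Z from
    ⟨fun w hw a => (h w hw a).1, fun w hw a => (h w hw a).2⟩
  intro w hw a
  have hrel := hn.chainOpt_rel (w := w) (by omega) hr
  simp only [GoodGraph.phiAfter, GoodGraph.epsAfter]
  generalize hp : chainOpt G.f w z = o at hrel ⊢
  generalize chainOpt G'.f w Z = O at hrel ⊢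
  cases hrel with
  | none => exact ⟨rfl, rfl⟩
  | @some p P hpP =>
    have hlp : hG.max.level p ≤ n := by rw [hG.level_chainOpt_f hp]; omega
    simp [hn.phi_eq p P hlp hpP, hn.eps_eq p P hlp hpP]

theorem exists_top {hG : IsRegularHighestWeight A G x0} (hn : LevelIso hG G' y0 n)
    (h1 : WordRel G G' x0 y0 x1 y1) (h2 : WordRel G G' x0 y0 x2 y2)
    (hl1 : hG.max.level x1 ≤ n) (hl2 : hG.max.level x2 ≤ n) {u v : List I}
    (hu : chainOpt G.f u z = some x1) (hv : chainOpt G.f v z = some x2) :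
    ∃ Z, chainOpt G'.f u Z = some y1 ∧ chainOpt G'.f v Z = some y2 ∧
      ProfileAgree G G' u.length z Z := by
  have hlu := hG.level_chainOpt_f hu
  have hlv := hG.level_chainOpt_f hv
  obtain ⟨Z, hzZ⟩ := hn.exists_rel z (by omega)
  have end_eq : ∀ {w x y}, chainOpt G.f w z = some x → hG.max.level x ≤ n →
      WordRel G G' x0 y0 x y → chainOpt G'.f w Z = some y := fun {w x y} hw hl hr => by
    have hrel := hn.chainOpt_rel (w := w) (by rw [hG.level_chainOpt_f hw] at hl; omega) hzZ
    rw [hw] at hrel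
    cases hY : chainOpt G'.f w Z with
    | none => simp [hY] at hrel
    | some Y => rw [hY, Option.rel_some_some] at hrel; rw [hn.rel_unique x Y y hl hrel hr]
  exact ⟨Z, end_eq hu hl1 h1, end_eq hv hl2 h2, hn.profileAgree (by omega) hzZ⟩

theorem e_rel {hG : IsRegularHighestWeight A G x0} (hn : LevelIso hG G' y0 n) {a : I} {w : X}
    (hx : hG.max.level x ≤ n + 1) (huniq : ∀ y', WordRel G G' x0 y0 x y' → y' = y)
    (h : G.e a x = some w) :
    ∃ z, G'.e a y = some z ∧ WordRel G G' x0 y0 w z := by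
  have hw : G.f a w = some x := (G.ef a w x).1 h
  have hlw : hG.max.level w ≤ n := by have := hG.level_f hw; omega
  obtain ⟨z, hwz⟩ := hn.exists_rel w hlw
  obtain ⟨y', hy', hxy'⟩ := hn.f_rel hlw hwz hw
  exact ⟨z, (G'.ef a z y).2 (huniq y' hxy' ▸ hy'), hwz⟩

theorem exists_rel_succ {hG : IsRegularHighestWeight A G x0} (hn : LevelIso hG G' y0 n)
    (hx : hG.max.level x ≤ n + 1) : ∃ y, WordRel G G' x0 y0 x y := by
  obtain ⟨w, hw⟩ := hG.max.2 x
  cases w with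
  | nil => exact ⟨y0, [], hw, rfl⟩
  | cons a w =>
    obtain ⟨x1, hx1, hax⟩ := chainOpt_cons_eq_some_iff.1 hw
    have hl1 : hG.max.level x1 ≤ n := by have := hG.level_f hax; omega
    obtain ⟨y1, hr1⟩ := hn.exists_rel x1 hl1
    obtain ⟨y, -, hr⟩ := hn.f_rel hl1 hr1 hax
    exact ⟨y, hr⟩

/-- The local step of the uniqueness argument: the configuration above `x1, x2` that forces
`f̃_a x1 = f̃_b x2` in `G` is copied to `G'`, where it forces the same. -/
theorem exists_f_eq {hG : IsRegularHighestWeight A G x0} (hG' : IsRegularHighestWeight A G' y0)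
    (hn : LevelIso hG G' y0 n) {a b : I} (hab : a ≠ b) (h1 : G.e a x = some x1)
    (h2 : G.e b x = some x2) (hl1 : hG.max.level x1 ≤ n) (hl2 : hG.max.level x2 ≤ n)
    (hr1 : WordRel G G' x0 y0 x1 y1) (hr2 : WordRel G G' x0 y0 x2 y2) :
    ∃ y, G'.f a y1 = some y ∧ G'.f b y2 = some y := by
  rcases upperConfig_or_of_e hG.rank2 hG.regular hG.extra hab h1 h2 with h | h
  · exact (h.transfer fun _ _ _ hu hv => hn.exists_top hr1 hr2 hl1 hl2 hu hv).exists_f_eq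
      hG'.regular.2.2.2 hG'.extra hab
  · obtain ⟨y, hy2, hy1⟩ := (h.transfer fun _ _ _ hu hv => hn.exists_top hr2 hr1 hl2 hl1 hu hv
      ).exists_f_eq hG'.regular.2.2.2 hG'.extra hab.symm
    exact ⟨y, hy1, hy2⟩

theorem rel_unique_succ {hG : IsRegularHighestWeight A G x0}
    (hG' : IsRegularHighestWeight A G' y0) (hn : LevelIso hG G' y0 n)
    (hx : hG.max.level x ≤ n + 1) (hr : WordRel G G' x0 y0 x y) (hr' : WordRel G G' x0 y0 x y') :
    y = y' := by
  rcases Nat.lt_or_eq_of_le hx with hx | hx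
  · exact hn.rel_unique x y y' (by omega) hr hr'
  obtain ⟨_ | ⟨a, u⟩, hux, huy⟩ := hr
  · simp [hG.level_eq hux] at hx
  obtain ⟨_ | ⟨b, v⟩, hvx, hvy⟩ := hr'
  · simp [hG.level_eq hvx] at hx
  obtain ⟨x1, hx1, hax⟩ := chainOpt_cons_eq_some_iff.1 hux
  obtain ⟨y1, hy1, hay⟩ := chainOpt_cons_eq_some_iff.1 huy
  obtain ⟨x2, hx2, hbx⟩ := chainOpt_cons_eq_some_iff.1 hvx
  obtain ⟨y2, hy2, hby⟩ := chainOpt_cons_eq_some_iff.1 hvy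
  have hl1 : hG.max.level x1 ≤ n := by have := hG.level_f hax; omega
  have hl2 : hG.max.level x2 ≤ n := by have := hG.level_f hbx; omega
  by_cases hab : a = b
  · subst hab
    obtain rfl := G.f_injective hax hbx
    obtain rfl := hn.rel_unique x1 y1 y2 hl1 ⟨u, hx1, hy1⟩ ⟨v, hx2, hy2⟩
    exact Option.some.inj (hay.symm.trans hby)
  obtain ⟨z, hz1, hz2⟩ := hn.exists_f_eq hG' hab ((G.ef a x1 x).2 hax) ((G.ef b x2 x).2 hbx)
    hl1 hl2 ⟨u, hx1, hy1⟩ ⟨v, hx2, hy2⟩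
  exact Option.some.inj ((hay.symm.trans hz1).trans (hz2.symm.trans hby))

end LevelIso

section Iso

variable {I X Y : Type*} {A : I → I → ℤ} {G : GoodGraph I X} {G' : GoodGraph I Y} {x0 : X}
  {y0 : Y} {x x' : X} {y y' : Y}

theorem levelIso_zero (hG : IsRegularHighestWeight A G x0) (hG' : IsRegularHighestWeight A G' y0)
    (hphi : ∀ i, G.phi i x0 = G'.phi i y0) : LevelIso hG G' y0 0 := by
  have hx : ∀ x, hG.max.level x ≤ 0 → x = x0 := fun x hx => hG.eq_of_level_eq_zero (by omega)
  have hy : ∀ y, WordRel G G' x0 y0 x0 y → y = y0 := by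
    rintro y ⟨w, hwx, hwy⟩
    obtain rfl : w = [] := List.length_eq_zero_iff.1 (hG.length_eq hwx (chainOpt_nil (g := G.f)))
    simpa using hwy.symm
  refine ⟨fun x hl => ⟨y0, [], by simp [hx x hl], rfl⟩, ?_, ?_, ?_⟩
  · intro x y y' hl hr hr'
    obtain rfl := hx x hl
    rw [hy y hr, hy y' hr']
  · intro x y hl hr i
    obtain rfl := hx x hl
    rw [hy y hr, G.eps_eq_zero_iff.2 (hG.max.1 i), G'.eps_eq_zero_iff.2 (hG'.max.1 i)]
  · intro x y hl hr i
    obtain rfl := hx x hl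
    rw [hy y hr, hphi i]

theorem LevelIso.succ {n : ℕ} {hG : IsRegularHighestWeight A G x0}
    {hG' : IsRegularHighestWeight A G' y0} (hphi : ∀ i, G.phi i x0 = G'.phi i y0)
    (hn : LevelIso hG G' y0 n) (hn' : LevelIso hG' G x0 n) : LevelIso hG G' y0 (n + 1) := by
  have huniq : ∀ x y y', hG.max.level x ≤ n + 1 → WordRel G G' x0 y0 x y →
      WordRel G G' x0 y0 x y' → y = y' := fun _ _ _ => hn.rel_unique_succ hG'
  have heps : ∀ x y, hG.max.level x ≤ n + 1 → WordRel G G' x0 y0 x y →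
      ∀ i, G.eps i x = G'.eps i y := by
    intro x y hx hr i
    cases hex : G.e i x with
    | some w =>
      obtain ⟨z, hz, hwz⟩ := hn.e_rel hx (fun y' hr' => huniq x y' y hx hr' hr) hex
      have hlw : hG.max.level w ≤ n := by have := hG.level_f ((G.ef i w x).1 hex); omega
      rw [G.eps_eq_of_e hex, G'.eps_eq_of_e hz, hn.eps_eq w z hlw hwz i]
    | none =>
      cases hey : G'.e i y with
      | none => rw [G.eps_eq_zero_iff.2 hex, G'.eps_eq_zero_iff.2 hey]
      | some z =>
        have hy : hG'.max.level y ≤ n + 1 := hr.level_eq hG hG' ▸ hx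
        obtain ⟨w, hw, -⟩ := hn'.e_rel hy
          (fun x' hr' => hn'.rel_unique_succ hG hy hr' hr.symm) hey
        simp [hex] at hw
  refine ⟨fun x hx => hn.exists_rel_succ hx, huniq, heps, fun x y hx hr i => ?_⟩
  have := hr.phi_sub_eps_eq hG.regular.1 hG'.regular.1 (fun i => by
    rw [G.eps_eq_zero_iff.2 (hG.max.1 i), G'.eps_eq_zero_iff.2 (hG'.max.1 i), hphi i]) i
  have := heps x y hx hr i
  omega

theorem levelIso (hG : IsRegularHighestWeight A G x0) (hG' : IsRegularHighestWeight A G' y0)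
    (hphi : ∀ i, G.phi i x0 = G'.phi i y0) (n : ℕ) :
    LevelIso hG G' y0 n ∧ LevelIso hG' G x0 n := by
  induction n with
  | zero => exact ⟨levelIso_zero hG hG' hphi, levelIso_zero hG' hG fun i => (hphi i).symm⟩
  | succ n ih => exact ⟨ih.1.succ hphi ih.2, ih.2.succ (fun i => (hphi i).symm) ih.1⟩

theorem exists_wordRel (hG : IsRegularHighestWeight A G x0)
    (hG' : IsRegularHighestWeight A G' y0) (hphi : ∀ i, G.phi i x0 = G'.phi i y0) (x : X) :
    ∃ y, WordRel G G' x0 y0 x y :=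
  (levelIso hG hG' hphi _).1.exists_rel x le_rfl

theorem WordRel.unique (hG : IsRegularHighestWeight A G x0)
    (hG' : IsRegularHighestWeight A G' y0) (hphi : ∀ i, G.phi i x0 = G'.phi i y0)
    (h : WordRel G G' x0 y0 x y) (h' : WordRel G G' x0 y0 x y') : y = y' :=
  (levelIso hG hG' hphi _).1.rel_unique x y y' le_rfl h h'

theorem WordRel.f_of_f (hG : IsRegularHighestWeight A G x0)
    (hG' : IsRegularHighestWeight A G' y0) (hphi : ∀ i, G.phi i x0 = G'.phi i y0) {i : I}
    (hr : WordRel G G' x0 y0 x y) (hr' : WordRel G G' x0 y0 x' y') (h : G.f i x = some x') :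
    G'.f i y = some y' := by
  obtain ⟨y'', hy'', hr''⟩ := (levelIso hG hG' hphi _).1.f_rel le_rfl hr h
  rwa [hr''.unique hG hG' hphi hr'] at hy''

theorem IsMaxElem.eq_of_forall_e_eq_none (hmax : IsMaxElem G x0) (h : ∀ i, G.e i x = none) :
    x = x0 := by
  obtain ⟨_ | ⟨a, w⟩, hw⟩ := hmax.2 x
  · simpa using hw.symm
  · obtain ⟨x1, -, hx⟩ := chainOpt_cons_eq_some_iff.1 hw
    exact absurd ((G.ef a x1 x).2 hx) (by simp [h a])

theorem IsMaxElem.map_eq (hmax : IsMaxElem G x0) (hmax' : IsMaxElem G' y0) {h : X → Y}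
    (hsurj : Function.Surjective h)
    (hcomp : ∀ i x y, G.f i x = some y ↔ G'.f i (h x) = some (h y)) : h x0 = y0 :=
  hmax'.eq_of_forall_e_eq_none fun i => by
    cases hz : G'.e i (h x0) with
    | none => rfl
    | some z =>
      obtain ⟨u, rfl⟩ := hsurj z
      have := (G.ef i u x0).2 ((hcomp i u x0).2 ((G'.ef i (h u) (h x0)).1 hz))
      simp [hmax.1 i] at this

theorem IsMaxElem.wordRel_map (hmax : IsMaxElem G x0) {h : X → Y} (h0 : h x0 = y0)
    (hcomp : ∀ i x y, G.f i x = some y → G'.f i (h x) = some (h y)) (x : X) :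
    WordRel G G' x0 y0 x (h x) := by
  obtain ⟨w, hw⟩ := hmax.2 x
  refine ⟨w, hw, ?_⟩
  induction w generalizing x with
  | nil =>
    obtain rfl : x0 = x := by simpa using hw
    simp [h0]
  | cons a w ih =>
    obtain ⟨x1, hx1, hax⟩ := chainOpt_cons_eq_some_iff.1 hw
    rw [chainOpt_cons_of_eq_some (ih x1 hx1)]
    exact hcomp a x1 x hax

end Iso

theorem stmt_18_general {I X Y : Type}
    (A : I → I → ℤ) (hrk : Rank2OK A)
    (G : GoodGraph I X) (G' : GoodGraph I Y)
    (hreg : ARegular A G) (hreg' : ARegular A G')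
    (hextra : ExtraB2 A G) (hextra' : ExtraB2 A G')
    (x0 : X) (y0 : Y) (hmax : IsMaxElem G x0) (hmax' : IsMaxElem G' y0)
    (hphi : ∀ i : I, G.phi i x0 = G'.phi i y0) :
    ∃! h : X → Y, Function.Bijective h ∧
      ∀ (i : I) (x y : X), G.f i x = some y ↔ G'.f i (h x) = some (h y) := by
  have hG : IsRegularHighestWeight A G x0 := ⟨hrk, hreg, hextra, hmax⟩
  have hG' : IsRegularHighestWeight A G' y0 := ⟨hrk, hreg', hextra', hmax'⟩
  have hphi' : ∀ i, G'.phi i y0 = G.phi i x0 := fun i => (hphi i).symm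
  choose h hh using exists_wordRel hG hG' hphi
  have hinj : Function.Injective h := fun x x' hxx' =>
    (hh x).symm.unique hG' hG hphi' (hxx' ▸ (hh x').symm)
  have hsurj : Function.Surjective h := fun y =>
    let ⟨x, hx⟩ := exists_wordRel hG' hG hphi' y
    ⟨x, (hh x).unique hG hG' hphi hx.symm⟩
  have hcomp : ∀ i x y, G.f i x = some y ↔ G'.f i (h x) = some (h y) := fun i x y =>
    ⟨(hh x).f_of_f hG hG' hphi (hh y), (hh x).symm.f_of_f hG' hG hphi' (hh y).symm⟩
  refine ⟨h, ⟨⟨hinj, hsurj⟩, hcomp⟩, fun h' ⟨hbij', hcomp'⟩ => funext fun x => ?_⟩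
  exact (hmax.wordRel_map (hmax.map_eq hmax' hbij'.2 hcomp') (fun i x y => (hcomp' i x y).1) x
    ).unique hG hG' hphi (hh x)

theorem stmt_18 {I X Y : Type} [Fintype I] [DecidableEq I]
    (A : I → I → ℤ) (hA : IsGCM A) (hsym : IsSymmetrizable A) (hrk : Rank2OK A)
    (G : GoodGraph I X) (G' : GoodGraph I Y)
    (hreg : ARegular A G) (hreg' : ARegular A G')
    (hextra : ExtraB2 A G) (hextra' : ExtraB2 A G')
    (x0 : X) (y0 : Y) (hmax : IsMaxElem G x0) (hmax' : IsMaxElem G' y0)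
    (hphi : ∀ i : I, G.phi i x0 = G'.phi i y0) :
    ∃! h : X → Y, Function.Bijective h ∧
      ∀ (i : I) (x y : X), G.f i x = some y ↔ G'.f i (h x) = some (h y) :=
  stmt_18_general A hrk G G' hreg hreg' hextra hextra' x0 y0 hmax hmax' hphi
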